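/- arXiv:2603.21843 — 2 statements merged into one kernel-verified Lean document; each statement's English description precedes it below -/
import Mathlib

section
/- For a tripartite pure state ψ on H_A ⊗ H_B ⊗ H_E with H_A = ℂ^d, let Z be the pinching channel Z(σ) = Σ_a ⟨a|σ|a⟩ |a⟩⟨a| in an eigenbasis of the reduced state ρ_A, let τ_AB = Tr_E |ψ⟩⟨ψ|, and τ_{𝖠E} = Tr_B (Z⊗I_BE)(|ψ⟩⟨ψ|). Then the conditional von Neumann entropy H(𝖠|E) of τ_{𝖠E} equals the quantum relative entropy D(τ_AB ‖ (Z⊗I_B)(τ_AB)). -/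
open Matrix Complex
open scoped Classical

/-- Matrix logarithm of a Hermitian matrix via its spectral decomposition
(with the convention `Real.log 0 = 0`, i.e. `log` restricted to the support). -/
noncomputable def mlog {n : Type*} [Fintype n] [DecidableEq n] (A : Matrix n n ℂ) :
    Matrix n n ℂ :=
  if h : A.IsHermitian then
    (h.eigenvectorUnitary : Matrix n n ℂ) *
      Matrix.diagonal (fun i => (Real.log (h.eigenvalues i) : ℂ)) *
      star (h.eigenvectorUnitary : Matrix n n ℂ)
  else 0

/-- von Neumann entropy `S(ρ) = -Tr[ρ log ρ]`, computed from the eigenvalues,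
with the convention `0 log 0 = 0`. -/
noncomputable def vnEntropy {n : Type*} [Fintype n] [DecidableEq n] (ρ : Matrix n n ℂ) : ℝ :=
  if h : ρ.IsHermitian then -∑ i, (h.eigenvalues i) * Real.log (h.eigenvalues i) else 0

/-- Quantum relative entropy `D(ρ‖σ) = Tr[ρ log ρ] - Tr[ρ log σ]`. -/
noncomputable def relEnt {n : Type*} [Fintype n] [DecidableEq n] (ρ σ : Matrix n n ℂ) : ℝ :=
  ((ρ * mlog ρ).trace - (ρ * mlog σ).trace).re

/-- Partial trace over the second (right) tensor factor. -/
noncomputable def ptraceR {m n : Type*} [Fintype n] (A : Matrix (m × n) (m × n) ℂ) :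
    Matrix m m ℂ :=
  Matrix.of fun i j => ∑ k, A (i, k) (j, k)

/-- Partial trace over the first (left) tensor factor. -/
noncomputable def ptraceL {m n : Type*} [Fintype m] (A : Matrix (m × n) (m × n) ℂ) :
    Matrix n n ℂ :=
  Matrix.of fun i j => ∑ k, A (k, i) (k, j)

/-- Outer product `|v⟩⟨v|`. -/
noncomputable def outer {n : Type*} (v : n → ℂ) : Matrix n n ℂ :=
  Matrix.vecMulVec v (star v)

/-- Pinching (dephasing) channel in the standard basis of the first tensor factor:
`(Z ⊗ I)(M)`. -/
noncomputable def pinchFst {d m : Type*} [DecidableEq d] (M : Matrix (d × m) (d × m) ℂ) :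
    Matrix (d × m) (d × m) ℂ :=
  Matrix.of fun p q => if p.1 = q.1 then M p q else 0

/-- The state `τ_{𝖠E} = Tr_B[(Z ⊗ I_{BE})(|ψ⟩⟨ψ|)]`. -/
noncomputable def tauAE {d b e : ℕ} (ψ : (Fin d × Fin b) × Fin e → ℂ) :
    Matrix (Fin d × Fin e) (Fin d × Fin e) ℂ :=
  Matrix.of fun p q => ∑ i : Fin b, pinchFst (outer ψ) ((p.1, i), p.2) ((q.1, i), q.2)


namespace Stmt0Aux

open Polynomial

variable {m n : Type*} [Fintype m] [DecidableEq m] [Fintype n] [DecidableEq n]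

lemma charpoly_eval' (A : Matrix m m ℂ) (x : ℂ) :
    A.charpoly.eval x = (Matrix.diagonal (fun _ => x) - A).det := by
  rw [Matrix.charpoly, ← Polynomial.coe_evalRingHom, RingHom.map_det]
  congr 1
  ext i j
  by_cases h : i = j <;>
    simp [h, Matrix.charmatrix_apply, Matrix.diagonal_apply]

lemma charpoly_transpose' (A : Matrix m m ℂ) : Aᵀ.charpoly = A.charpoly := by
  apply Polynomial.funext
  intro x
  rw [charpoly_eval', charpoly_eval', ← Matrix.det_transpose (Matrix.diagonal _ - A),
    Matrix.transpose_sub, Matrix.diagonal_transpose]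

lemma det_diag_sub_eq (x : ℂ) (hx : x ≠ 0) (C : Matrix m m ℂ) :
    (Matrix.diagonal (fun _ => x) - C).det = x ^ (Fintype.card m) * (1 + (-(x⁻¹)) • C).det := by
  have h1 : Matrix.diagonal (fun (_ : m) => x) - C = x • (1 + (-(x⁻¹)) • C) := by
    rw [smul_add, smul_smul]
    have hh : x * -x⁻¹ = -1 := by field_simp
    rw [hh, neg_one_smul]
    have hh2 : x • (1 : Matrix m m ℂ) = Matrix.diagonal (fun _ => x) := by
      ext i j; by_cases h : i = j <;> simp [h, Matrix.one_apply, Matrix.diagonal_apply]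
    rw [hh2]
    rfl
  rw [h1, Matrix.det_smul]

lemma charpoly_mul_rect (A : Matrix m n ℂ) (B : Matrix n m ℂ) :
    X ^ (Fintype.card n) * (A * B).charpoly = X ^ (Fintype.card m) * (B * A).charpoly := by
  apply Polynomial.funext
  intro x
  simp only [eval_mul, eval_pow, eval_X, charpoly_eval']
  by_cases hx : x = 0
  · subst hx
    rcases isEmpty_or_nonempty n with hn | hn
    · have hAB : A * B = 0 := by ext i j; simp [Matrix.mul_apply]
      rw [hAB, sub_zero, Matrix.det_diagonal, Finset.prod_const]
      simp [Fintype.card_eq_zero, Matrix.det_isEmpty]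
    rcases isEmpty_or_nonempty m with hm | hm
    · have hBA : B * A = 0 := by ext i j; simp [Matrix.mul_apply]
      rw [hBA, sub_zero, Matrix.det_diagonal, Finset.prod_const]
      simp [Fintype.card_eq_zero, Matrix.det_isEmpty]
    · rw [zero_pow Fintype.card_ne_zero, zero_pow Fintype.card_ne_zero, zero_mul, zero_mul]
  · rw [det_diag_sub_eq x hx (A * B), det_diag_sub_eq x hx (B * A)]
    have h1 : (-(x⁻¹)) • (A * B) = A * ((-(x⁻¹)) • B) := by rw [Matrix.mul_smul]
    have h2 : (-(x⁻¹)) • (B * A) = ((-(x⁻¹)) • B) * A := by rw [Matrix.smul_mul]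
    rw [h1, h2, Matrix.det_one_add_mul_comm]
    ring

lemma charpoly_hermitian {A : Matrix m m ℂ} (h : A.IsHermitian) :
    A.charpoly = ∏ i, (X - C ((h.eigenvalues i : ℝ) : ℂ)) := by
  set U : Matrix m m ℂ := (h.eigenvectorUnitary : Matrix m m ℂ) with hUdef
  have hU1 : U * star U = 1 := Matrix.mem_unitaryGroup_iff.mp h.eigenvectorUnitary.2
  apply Polynomial.funext
  intro x
  rw [charpoly_eval']
  set D : Matrix m m ℂ := Matrix.diagonal (RCLike.ofReal ∘ h.eigenvalues) with hDdef
  have key : Matrix.diagonal (fun _ => x) - A = U * (Matrix.diagonal (fun _ => x) - D) * star U := by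
    rw [Matrix.mul_sub, Matrix.sub_mul]
    congr 1
    · have hx1 : Matrix.diagonal (fun (_ : m) => x) = x • (1 : Matrix m m ℂ) := by
        ext i j; by_cases hij : i = j <;> simp [hij, Matrix.one_apply, Matrix.diagonal_apply]
      rw [hx1, Matrix.mul_smul, mul_one, Matrix.smul_mul, hU1]
    · exact h.spectral_theorem
  rw [key, Matrix.det_mul, Matrix.det_mul]
  have hdet : U.det * (star U).det = 1 := by rw [← Matrix.det_mul, hU1, Matrix.det_one]
  rw [mul_comm U.det _, mul_assoc, hdet, mul_one]
  rw [hDdef, Matrix.diagonal_sub, Matrix.det_diagonal]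
  rw [eval_prod]
  apply Finset.prod_congr rfl
  intro i _
  simp [RCLike.ofReal]

lemma roots_charpoly_hermitian {A : Matrix m m ℂ} (h : A.IsHermitian) :
    A.charpoly.roots = Finset.univ.val.map (fun i => ((h.eigenvalues i : ℝ) : ℂ)) := by
  rw [charpoly_hermitian h, Finset.prod_eq_multiset_prod]
  rw [show Multiset.map (fun i => X - C ((h.eigenvalues i : ℝ) : ℂ)) Finset.univ.val
      = Multiset.map (fun c => X - C c)
          (Finset.univ.val.map (fun i => ((h.eigenvalues i : ℝ) : ℂ))) by
    rw [Multiset.map_map]; rfl]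
  exact roots_multiset_prod_X_sub_C _

lemma sum_g_eq_multiset {k : Type*} [Fintype k] (g : ℝ → ℝ) (f : k → ℝ) :
    ∑ i, g (f i) = (Multiset.map ((fun z : ℂ => g z.re) ∘ fun i => ((f i : ℝ) : ℂ)) Finset.univ.val).sum := by
  rw [Finset.sum]
  congr 1

lemma sum_eig_eq {A : Matrix m m ℂ} {B : Matrix n n ℂ}
    (hA : A.IsHermitian) (hB : B.IsHermitian)
    (hc : X ^ (Fintype.card n) * A.charpoly = X ^ (Fintype.card m) * B.charpoly)
    (g : ℝ → ℝ) (hg : g 0 = 0) :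
    ∑ i, g (hA.eigenvalues i) = ∑ j, g (hB.eigenvalues j) := by
  have hA0 : A.charpoly ≠ 0 := A.charpoly_monic.ne_zero
  have hB0 : B.charpoly ≠ 0 := B.charpoly_monic.ne_zero
  have hX : (X : ℂ[X]) ^ (Fintype.card n) ≠ 0 := pow_ne_zero _ X_ne_zero
  have hX' : (X : ℂ[X]) ^ (Fintype.card m) ≠ 0 := pow_ne_zero _ X_ne_zero
  have hr := congrArg Polynomial.roots hc
  rw [Polynomial.roots_mul (mul_ne_zero hX hA0), Polynomial.roots_mul (mul_ne_zero hX' hB0),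
    Polynomial.roots_pow, Polynomial.roots_pow, Polynomial.roots_X,
    roots_charpoly_hermitian hA, roots_charpoly_hermitian hB] at hr
  have hs := congrArg (fun s : Multiset ℂ => (s.map (fun z => g z.re)).sum) hr
  simp only [Multiset.map_add, Multiset.sum_add, Multiset.map_nsmul, Multiset.map_singleton,
    Multiset.sum_nsmul, Multiset.sum_singleton, Complex.zero_re, hg, smul_zero, zero_add,
    Multiset.map_map] at hs
  have h1 := sum_g_eq_multiset (k := m) g hA.eigenvalues
  have h2 := sum_g_eq_multiset (k := n) g hB.eigenvalues
  exact h1.trans (hs.trans h2.symm)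

lemma vnEntropy_eq {A : Matrix m m ℂ} (h : A.IsHermitian) :
    vnEntropy A = -∑ i, (h.eigenvalues i) * Real.log (h.eigenvalues i) := by
  rw [vnEntropy, dif_pos h]

lemma vnEntropy_mul_conjTranspose (M : Matrix m n ℂ) :
    vnEntropy (M * Mᴴ) = vnEntropy (Mᵀ * Mᵀᴴ) := by
  have hA : (M * Mᴴ).IsHermitian := Matrix.isHermitian_mul_conjTranspose_self M
  have hB : (Mᵀ * Mᵀᴴ).IsHermitian := Matrix.isHermitian_mul_conjTranspose_self Mᵀ
  have h2 : Mᵀᴴ * Mᵀ = (M * Mᴴ)ᵀ := by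
    ext i j
    simp only [Matrix.mul_apply, Matrix.transpose_apply, Matrix.conjTranspose_apply]
    apply Finset.sum_congr rfl
    intro k _
    ring
  have hc : X ^ (Fintype.card n) * (M * Mᴴ).charpoly
      = X ^ (Fintype.card m) * (Mᵀ * Mᵀᴴ).charpoly := by
    have h1 := charpoly_mul_rect Mᵀ (Mᵀᴴ)
    rw [h2, charpoly_transpose'] at h1
    exact h1.symm
  rw [vnEntropy_eq hA, vnEntropy_eq hB]
  exact congrArg Neg.neg
    (sum_eig_eq hA hB hc (fun t => t * Real.log t) (by simp))

lemma trace_mul_mlog {A : Matrix m m ℂ} (h : A.IsHermitian) :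
    (A * mlog A).trace = ((∑ i, h.eigenvalues i * Real.log (h.eigenvalues i) : ℝ) : ℂ) := by
  rw [mlog, dif_pos h]
  set U : Matrix m m ℂ := (h.eigenvectorUnitary : Matrix m m ℂ) with hUdef
  have hU2 : star U * U = 1 := Matrix.mem_unitaryGroup_iff'.mp h.eigenvectorUnitary.2
  set D : Matrix m m ℂ := Matrix.diagonal (RCLike.ofReal ∘ h.eigenvalues) with hDdef
  set F : Matrix m m ℂ := Matrix.diagonal (fun i => (Real.log (h.eigenvalues i) : ℂ)) with hFdef
  have key : A * (U * F * star U) = U * (D * F) * star U := by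
    conv_lhs => rw [h.spectral_theorem, Unitary.conjStarAlgAut_apply]
    simp only [Matrix.mul_assoc]
    rw [← Matrix.mul_assoc (star U) U, hU2, Matrix.one_mul]
  rw [key, Matrix.trace_mul_cycle, ← Matrix.mul_assoc, hU2, Matrix.one_mul]
  rw [hDdef, hFdef, Matrix.diagonal_mul_diagonal, Matrix.trace_diagonal]
  push_cast
  apply Finset.sum_congr rfl
  intro i _
  simp [RCLike.ofReal]

lemma mlog_comm {A B : Matrix m m ℂ} (h : A.IsHermitian) (hAB : B * A = A * B) :
    B * mlog A = mlog A * B := by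
  rw [mlog, dif_pos h]
  set U : Matrix m m ℂ := (h.eigenvectorUnitary : Matrix m m ℂ) with hUdef
  have hU1 : U * star U = 1 := Matrix.mem_unitaryGroup_iff.mp h.eigenvectorUnitary.2
  have hU2 : star U * U = 1 := Matrix.mem_unitaryGroup_iff'.mp h.eigenvectorUnitary.2
  set D : Matrix m m ℂ := Matrix.diagonal (RCLike.ofReal ∘ h.eigenvalues) with hDdef
  set F : Matrix m m ℂ := Matrix.diagonal (fun i => (Real.log (h.eigenvalues i) : ℂ)) with hFdef
  have hAU : A * U = U * D := by
    conv_lhs => rw [h.spectral_theorem, Unitary.conjStarAlgAut_apply]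
    simp only [Matrix.mul_assoc]
    rw [hU2, Matrix.mul_one]
  have hDeq : star U * A * U = D := by
    conv_lhs => rw [h.spectral_theorem, Unitary.conjStarAlgAut_apply]
    simp only [Matrix.mul_assoc]
    rw [hU2, Matrix.mul_one, ← Matrix.mul_assoc, hU2, Matrix.one_mul]
  have hCD : (star U * B * U) * D = D * (star U * B * U) := by
    calc (star U * B * U) * D = star U * B * (U * D) := by simp only [Matrix.mul_assoc]
    _ = star U * (B * A) * U := by rw [← hAU]; simp only [Matrix.mul_assoc]
    _ = star U * (A * B) * U := by rw [hAB]
    _ = (star U * A * U) * (star U * B * U) := by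
        simp only [Matrix.mul_assoc]
        rw [← Matrix.mul_assoc U (star U) (B * U), hU1, Matrix.one_mul]
    _ = D * (star U * B * U) := by rw [hDeq]
  have hCF : (star U * B * U) * F = F * (star U * B * U) := by
    ext i j
    have hij := congrFun (congrFun hCD i) j
    rw [hDdef, Matrix.mul_diagonal, Matrix.diagonal_mul] at hij
    rw [hFdef, Matrix.mul_diagonal, Matrix.diagonal_mul]
    by_cases hC : (star U * B * U) i j = 0
    · simp [hC]
    · have heq : h.eigenvalues j = h.eigenvalues i := by
        have h2 : (star U * B * U) i j * (RCLike.ofReal ∘ h.eigenvalues) j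
            = (star U * B * U) i j * (RCLike.ofReal ∘ h.eigenvalues) i := by
          rw [hij, mul_comm]
        have h3 := mul_left_cancel₀ hC h2
        simpa [RCLike.ofReal, Complex.ofReal_inj] using h3
      rw [heq, mul_comm]
  calc B * (U * F * star U) = U * ((star U * B * U) * F) * star U := by
        simp only [Matrix.mul_assoc]
        rw [← Matrix.mul_assoc U (star U) (B * (U * (F * star U))), hU1, Matrix.one_mul]
  _ = U * (F * (star U * B * U)) * star U := by rw [hCF]
  _ = U * F * star U * B := by
        simp only [Matrix.mul_assoc]
        rw [hU1, Matrix.mul_one]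

end Stmt0Aux

namespace Stmt0Pinch

variable {α β : Type*} [Fintype α] [DecidableEq α] [Fintype β] [DecidableEq β]

/-- projector onto block `a` -/
noncomputable def Pj (a : α) : Matrix (α × β) (α × β) ℂ :=
  Matrix.diagonal (fun p => if p.1 = a then 1 else 0)

lemma pinchFst_isHermitian {M : Matrix (α × β) (α × β) ℂ} (h : M.IsHermitian) :
    (pinchFst M).IsHermitian := by
  ext p q
  show star (pinchFst M q p) = pinchFst M p q
  simp only [pinchFst, Matrix.of_apply]
  by_cases hc : p.1 = q.1
  · rw [if_pos hc.symm, if_pos hc, ← Matrix.conjTranspose_apply, h]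
  · rw [if_neg (fun hh => hc hh.symm), if_neg hc, star_zero]

lemma Pj_comm_pinchFst (a : α) (M : Matrix (α × β) (α × β) ℂ) :
    Pj a * pinchFst M = pinchFst M * Pj a := by
  ext p q
  simp only [Pj, Matrix.diagonal_mul, Matrix.mul_diagonal, pinchFst, Matrix.of_apply]
  by_cases hc : p.1 = q.1
  · rw [hc]; exact mul_comm _ _
  · simp [hc]

lemma pinched_of_comm {N : Matrix (α × β) (α × β) ℂ}
    (hc : ∀ a, Pj a * N = N * Pj a) : pinchFst N = N := by
  ext p q
  by_cases h : p.1 = q.1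
  · simp [pinchFst, h]
  · have := congrFun (congrFun (hc p.1) p) q
    simp only [Pj, Matrix.diagonal_mul, Matrix.mul_diagonal, if_pos rfl,
      if_neg (fun hh : q.1 = p.1 => h hh.symm)] at this
    simp only [if_true, one_mul, mul_zero] at this
    simp [pinchFst, h, this]

lemma pinchFst_mlog {ρ : Matrix (α × β) (α × β) ℂ} (h : (pinchFst ρ).IsHermitian) :
    pinchFst (mlog (pinchFst ρ)) = mlog (pinchFst ρ) := by
  apply pinched_of_comm
  intro a
  exact Stmt0Aux.mlog_comm h (Pj_comm_pinchFst a ρ)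

lemma trace_mul_pinch (ρ N : Matrix (α × β) (α × β) ℂ) :
    (ρ * pinchFst N).trace = (pinchFst ρ * pinchFst N).trace := by
  simp only [Matrix.trace, Matrix.diag, Matrix.mul_apply]
  apply Finset.sum_congr rfl
  intro p _
  apply Finset.sum_congr rfl
  intro q _
  simp only [pinchFst, Matrix.of_apply]
  by_cases hc : q.1 = p.1
  · rw [if_pos hc, if_pos hc.symm]
  · rw [if_neg hc, mul_zero, mul_zero]

lemma relEnt_pinch (ρ : Matrix (α × β) (α × β) ℂ) (hρ : ρ.IsHermitian) :
    relEnt ρ (pinchFst ρ) = vnEntropy (pinchFst ρ) - vnEntropy ρ := by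
  have hσ : (pinchFst ρ).IsHermitian := pinchFst_isHermitian hρ
  have h2 : (ρ * mlog (pinchFst ρ)).trace = (pinchFst ρ * mlog (pinchFst ρ)).trace := by
    conv_lhs => rw [← pinchFst_mlog hσ]
    rw [trace_mul_pinch, pinchFst_mlog hσ]
  rw [relEnt, h2, Stmt0Aux.trace_mul_mlog hρ, Stmt0Aux.trace_mul_mlog hσ,
    Stmt0Aux.vnEntropy_eq hρ, Stmt0Aux.vnEntropy_eq hσ]
  rw [← Complex.ofReal_sub, Complex.ofReal_re]
  ring

end Stmt0Pinch


namespace Stmt0Final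

variable {m n : Type*} [Fintype m] [DecidableEq m] [Fintype n] [DecidableEq n]

lemma ptraceR_outer (v : (m × n) → ℂ) :
    ptraceR (outer v) = (Matrix.of fun i j => v (i, j)) * (Matrix.of fun i j => v (i, j))ᴴ := by
  ext i j
  simp [ptraceR, outer, Matrix.mul_apply, Matrix.vecMulVec_apply, Matrix.conjTranspose_apply]

lemma ptraceL_outer (v : (m × n) → ℂ) :
    ptraceL (outer v)
      = (Matrix.of fun i j => v (i, j))ᵀ * ((Matrix.of fun i j => v (i, j))ᵀ)ᴴ := by
  ext i j
  simp [ptraceL, outer, Matrix.mul_apply, Matrix.vecMulVec_apply, Matrix.conjTranspose_apply,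
    Matrix.transpose_apply]

lemma vnEntropy_ptrace (v : (m × n) → ℂ) :
    vnEntropy (ptraceR (outer v)) = vnEntropy (ptraceL (outer v)) := by
  rw [ptraceR_outer, ptraceL_outer]
  exact Stmt0Aux.vnEntropy_mul_conjTranspose _

end Stmt0Final

/-- For a tripartite pure state `ψ` on `ℂ^d ⊗ H_B ⊗ H_E`, with `Z` the
pinching channel in an eigenbasis of `ρ_A = Tr_{BE}|ψ⟩⟨ψ|` (here: the standard basis of `ℂ^d`,
which is an eigenbasis since `ρ_A` is assumed diagonal), `τ_AB = Tr_E|ψ⟩⟨ψ|` and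
`τ_{𝖠E} = Tr_B (Z ⊗ I_{BE})(|ψ⟩⟨ψ|)`, the conditional entropy `H(𝖠|E)_{τ_{𝖠E}}` equals
`D(τ_AB ‖ (Z ⊗ I_B)(τ_AB))`. -/
theorem stmt0 {d b e : ℕ} (ψ : (Fin d × Fin b) × Fin e → ℂ)
    (hψ : ∑ i, Complex.normSq (ψ i) = 1)
    (hdiag : ∀ a a' : Fin d, a ≠ a' → ptraceR (ptraceR (outer ψ)) a a' = 0) :
    vnEntropy (tauAE ψ) - vnEntropy (ptraceL (tauAE ψ)) =
      relEnt (ptraceR (outer ψ)) (pinchFst (ptraceR (outer ψ))) := by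
  classical
  set ρ : Matrix (Fin d × Fin b) (Fin d × Fin b) ℂ := ptraceR (outer ψ) with hρdef
  have hρ : ρ.IsHermitian := by
    rw [hρdef, Stmt0Final.ptraceR_outer]
    exact Matrix.isHermitian_mul_conjTranspose_self _
  set χ : ((Fin d × Fin e) × (Fin d × Fin b)) → ℂ :=
    fun x => if x.1.1 = x.2.1 then ψ ((x.1.1, x.2.2), x.1.2) else 0 with hχdef
  have ha : tauAE ψ = ptraceR (outer χ) := by
    ext p q
    simp only [tauAE, ptraceR, outer, Matrix.of_apply, Matrix.vecMulVec_apply, Pi.star_apply,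
      pinchFst, hχdef]
    rw [Fintype.sum_prod_type, Finset.sum_comm]
    apply Finset.sum_congr rfl
    intro i _
    by_cases hpq : p.1 = q.1
    case pos => simp [Prod.ext_iff, hpq, apply_ite, Finset.sum_ite_eq]
    case neg =>
      simp only [Prod.mk.injEq, hpq, false_and, if_false, apply_ite (star : ℂ → ℂ), star_zero,
        mul_ite, ite_mul, zero_mul, mul_zero]
      rw [Finset.sum_ite_eq]
      simp only [Finset.mem_univ, if_true]
      rw [if_neg hpq]
  have hb : ptraceL (outer χ) = pinchFst ρ := by
    ext k l
    simp only [ptraceL, ptraceR, outer, Matrix.of_apply, Matrix.vecMulVec_apply, Pi.star_apply,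
      pinchFst, hχdef, hρdef]
    rw [Fintype.sum_prod_type]
    by_cases hkl : k.1 = l.1
    · rw [if_pos hkl]
      rw [Finset.sum_eq_single k.1]
      · apply Finset.sum_congr rfl
        intro e' _
        simp only [if_pos rfl, if_true]
        rw [if_pos hkl]
        rw [show ((k.1 : Fin d), k.2) = k from rfl, show ((k.1 : Fin d), l.2) = l by rw [hkl]]
      · intro a _ hne
        apply Finset.sum_eq_zero
        intro e' _
        rw [if_neg hne]
        simp
      · intro hmem
        exact absurd (Finset.mem_univ k.1) hmem
    · rw [if_neg hkl]
      apply Finset.sum_eq_zero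
      intro a _
      apply Finset.sum_eq_zero
      intro e' _
      by_cases h1 : a = k.1
      · simp only [h1, if_pos rfl]
        rw [if_neg hkl]
        simp
      · rw [if_neg h1]
        simp
  have hcE : ptraceL (tauAE ψ) = ptraceL (outer ψ) := by
    ext e1 e2
    simp only [ptraceL, tauAE, Matrix.of_apply, pinchFst]
    rw [Fintype.sum_prod_type]
    apply Finset.sum_congr rfl
    intro a _
    apply Finset.sum_congr rfl
    intro i _
    simp
  have hL1 : vnEntropy (tauAE ψ) = vnEntropy (pinchFst ρ) := by
    rw [ha, Stmt0Final.vnEntropy_ptrace χ, hb]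
  have hL2 : vnEntropy (ptraceL (tauAE ψ)) = vnEntropy ρ := by
    rw [hcE, hρdef, ← Stmt0Final.vnEntropy_ptrace ψ]
  rw [hL1, hL2, Stmt0Pinch.relEnt_pinch ρ hρ]
end

section
/- Let G be the 4×4 Hermitian matrix with diagonal (p, p, 1−p, 1−p) and off-diagonal entries G₁₃ = G₁₄ = G₂₃ = c, G₂₄ = (−1)^N c, G₁₂ = G₃₄ = 0 (and Hermitian symmetric entries), where c = 2^{−N/2}√(p(1−p)), p ∈ [0,1], N a positive integer. Then the largest eigenvalue of G is 1/2 + (1/2)√((2p−1)² + 8·2^{−N} p(1−p)) if N is odd, and 1/2 + (1/2)√((2p−1)² + 16·2^{−N} p(1−p)) if N is even. -/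
open Matrix

/-- The 4×4 Gram matrix with diagonal `(p, p, 1−p, 1−p)`, off-diagonal entries
`G₁₃ = G₁₄ = G₂₃ = c`, `G₂₄ = (−1)^N c`, `G₁₂ = G₃₄ = 0`, where
`c = 2^{−N/2} √(p(1−p))`. -/
noncomputable def GramG (p : ℝ) (N : ℕ) : Matrix (Fin 4) (Fin 4) ℝ :=
  let c : ℝ := (2 : ℝ) ^ (-(N : ℝ) / 2) * Real.sqrt (p * (1 - p))
  !![p, 0, c, c;
     0, p, c, (-1 : ℝ) ^ N * c;
     c, c, 1 - p, 0;
     c, (-1 : ℝ) ^ N * c, 0, 1 - p]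

lemma gram_mem_iff (p : ℝ) (N : ℕ) (h : (GramG p N).IsHermitian) (x : ℝ) :
    x ∈ Set.range h.eigenvalues ↔ (x • (1 : Matrix (Fin 4) (Fin 4) ℝ) - GramG p N).det = 0 := by
  rw [← h.spectrum_real_eq_range_eigenvalues, spectrum.mem_iff, Algebra.algebraMap_eq_smul_one,
    Matrix.isUnit_iff_isUnit_det, isUnit_iff_ne_zero, not_ne_iff]

lemma smul_one_sub (x p c e : ℝ) :
    x • (1 : Matrix (Fin 4) (Fin 4) ℝ) -
      !![p, 0, c, c; 0, p, c, e; c, c, 1 - p, 0; c, e, 0, 1 - p]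
    = !![x - p, 0, -c, -c; 0, x - p, -c, -e; -c, -c, x - (1 - p), 0;
         -c, -e, 0, x - (1 - p)] := by
  ext i j
  fin_cases i <;> fin_cases j <;>
    simp [Matrix.one_apply, Matrix.sub_apply, Matrix.smul_apply, Matrix.vecHead,
      Matrix.vecTail]

lemma det_explicit (a b c d e f : ℝ) :
    (!![a, 0, c, d; 0, a, e, f; c, e, b, 0; d, f, 0, b]).det
      = (a * b - c ^ 2 - e ^ 2) * (a * b - d ^ 2 - f ^ 2)
        - (c * d + e * f) ^ 2 := by
  have h1 : (Fin.succAbove 2 (2 : Fin 3)) = (3 : Fin 4) := rfl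
  have h2 : (Fin.castSucc (2 : Fin 3)) = (2 : Fin 4) := rfl
  have h3 : (Fin.succAbove 3 (2 : Fin 3)) = (2 : Fin 4) := rfl
  simp [Matrix.det_succ_row_zero, Fin.sum_univ_succ, h1, h2, h3]
  ring

theorem stmt14 (p : ℝ) (hp : p ∈ Set.Icc (0 : ℝ) 1) (N : ℕ) (hN : 0 < N)
    (h : (GramG p N).IsHermitian) :
    IsGreatest (Set.range h.eigenvalues)
      (if Odd N then
        1 / 2 + Real.sqrt ((2 * p - 1) ^ 2 + 8 * (2 : ℝ) ^ (-(N : ℝ)) * p * (1 - p)) / 2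
      else
        1 / 2 + Real.sqrt ((2 * p - 1) ^ 2 + 16 * (2 : ℝ) ^ (-(N : ℝ)) * p * (1 - p)) / 2) := by
  obtain ⟨hp0, hp1⟩ := hp
  set c : ℝ := (2 : ℝ) ^ (-(N : ℝ) / 2) * Real.sqrt (p * (1 - p)) with hc
  have hpp : 0 ≤ p * (1 - p) := by nlinarith
  have hc2 : c ^ 2 = (2 : ℝ) ^ (-(N : ℝ)) * (p * (1 - p)) := by
    rw [hc, mul_pow, Real.sq_sqrt hpp, ← Real.rpow_natCast ((2 : ℝ) ^ (-(N : ℝ) / 2)) 2,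
      ← Real.rpow_mul (by norm_num : (0:ℝ) ≤ 2)]
    norm_num
  have hG0 : GramG p N
      = !![p, 0, c, c; 0, p, c, (-1 : ℝ) ^ N * c; c, c, 1 - p, 0;
           c, (-1 : ℝ) ^ N * c, 0, 1 - p] := rfl
  by_cases hodd : Odd N
  · rw [if_pos hodd]
    have hneg : (-1 : ℝ) ^ N = -1 := Odd.neg_one_pow hodd
    have hG : GramG p N
        = !![p, 0, c, c; 0, p, c, -c; c, c, 1 - p, 0; c, -c, 0, 1 - p] := by
      rw [hG0, hneg]; norm_num
    have harg : (2 * p - 1) ^ 2 + 8 * (2 : ℝ) ^ (-(N : ℝ)) * p * (1 - p)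
        = (2 * p - 1) ^ 2 + 8 * c ^ 2 := by rw [hc2]; ring
    rw [harg]
    set s : ℝ := Real.sqrt ((2 * p - 1) ^ 2 + 8 * c ^ 2) with hsdef
    have hs2 : s ^ 2 = (2 * p - 1) ^ 2 + 8 * c ^ 2 := Real.sq_sqrt (by positivity)
    have hs0 : 0 ≤ s := Real.sqrt_nonneg _
    constructor
    · rw [gram_mem_iff, hG, smul_one_sub, det_explicit]
      linear_combination (s ^ 2 - ((2 * p - 1) ^ 2 + 8 * c ^ 2)) / 16 * hs2
    · rintro x hx
      rw [gram_mem_iff, hG, smul_one_sub, det_explicit] at hx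
      have h0 : ((x - p) * (x - (1 - p)) - 2 * c ^ 2) ^ 2 = 0 := by linear_combination hx
      have h0' : (x - p) * (x - (1 - p)) - 2 * c ^ 2 = 0 :=
        pow_eq_zero_iff (by norm_num) |>.mp h0
      nlinarith [hs2, hs0, h0', sq_nonneg (x - 1 / 2 - s / 2), sq_nonneg (x - 1 / 2 + s / 2)]
  · rw [if_neg hodd]
    have hneg : (-1 : ℝ) ^ N = 1 := (Nat.not_odd_iff_even.mp hodd).neg_one_pow
    have hG : GramG p N
        = !![p, 0, c, c; 0, p, c, c; c, c, 1 - p, 0; c, c, 0, 1 - p] := by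
      rw [hG0, hneg]; norm_num
    have harg : (2 * p - 1) ^ 2 + 16 * (2 : ℝ) ^ (-(N : ℝ)) * p * (1 - p)
        = (2 * p - 1) ^ 2 + 16 * c ^ 2 := by rw [hc2]; ring
    rw [harg]
    set s : ℝ := Real.sqrt ((2 * p - 1) ^ 2 + 16 * c ^ 2) with hsdef
    have hs2 : s ^ 2 = (2 * p - 1) ^ 2 + 16 * c ^ 2 := Real.sq_sqrt (by positivity)
    have hs0 : 0 ≤ s := Real.sqrt_nonneg _
    constructor
    · rw [gram_mem_iff, hG, smul_one_sub, det_explicit]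
      linear_combination
        ((s ^ 2 - ((2 * p - 1) ^ 2 + 16 * c ^ 2)) / 16 + c ^ 2) * hs2
    · rintro x hx
      rw [gram_mem_iff, hG, smul_one_sub, det_explicit] at hx
      have hfac : (x - p) * (x - (1 - p)) * ((x - p) * (x - (1 - p)) - 4 * c ^ 2) = 0 := by
        linear_combination hx
      rcases mul_eq_zero.mp hfac with h1 | h2
      · have key : |2 * p - 1| ≤ s := by
          rw [hsdef, ← Real.sqrt_sq_eq_abs]
          exact Real.sqrt_le_sqrt (by nlinarith [sq_nonneg c])
        rcases mul_eq_zero.mp h1 with hxp | hxp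
        · have := le_abs_self (2 * p - 1); linarith
        · have := neg_abs_le (2 * p - 1); linarith
      · nlinarith [hs2, hs0, h2, sq_nonneg (x - 1 / 2 - s / 2), sq_nonneg (x - 1 / 2 + s / 2)]
end
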